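/- If M is a co-Kasch right R-module and K is a submodule of M contained in Rad(M), then M/K is a co-Kasch module. -/

import Mathlib

def IsCoKasch (R : Type*) [Ring R] (M : Type*) [AddCommGroup M] [Module R M] : Prop :=
  ∀ (K : Submodule R M) (S : Submodule R (M ⧸ K)), IsSimpleModule R S →
    ∃ f : M →ₗ[R] S, Function.Surjective f

/-!
A simple subfactor of `M/K` is also a simple subfactor of `M`, so it is the image of some
`f : M → S`. The kernel of `f` is a maximal submodule, so it contains `Rad(M) ⊇ K`, and `f`
factors through `M/K`.
-/

open Function Submodule

variable {R M : Type*} [Ring R] [AddCommGroup M] [Module R M]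

theorem Module.jacobson_le_ker_of_surjective {S : Type*} [AddCommGroup S] [Module R S]
    [IsSimpleModule R S] {f : M →ₗ[R] S} (hf : Surjective f) :
    Module.jacobson R M ≤ LinearMap.ker f :=
  sInf_le (LinearMap.isCoatom_ker_of_surjective hf)

theorem IsCoKasch.exists_surjective_of_surjective (hM : IsCoKasch R M) {N : Type*}
    [AddCommGroup N] [Module R N] {q : M →ₗ[R] N} (hq : Surjective q) (L : Submodule R N)
    (S : Submodule R (N ⧸ L)) [IsSimpleModule R S] :
    ∃ f : M →ₗ[R] S, Surjective f := by
  let p : M →ₗ[R] N ⧸ L := L.mkQ ∘ₗ q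
  have hp : Surjective p := L.mkQ_surjective.comp hq
  let e : (M ⧸ LinearMap.ker p) ≃ₗ[R] N ⧸ L := p.quotKerEquivOfSurjective hp
  let eS : S.map e.symm.toLinearMap ≃ₗ[R] S := (e.symm.submoduleMap S).symm
  have hS' : IsSimpleModule R (S.map e.symm.toLinearMap) := IsSimpleModule.congr eS
  obtain ⟨f, hf⟩ := hM (LinearMap.ker p) (S.map e.symm.toLinearMap) hS'
  exact ⟨eS.toLinearMap ∘ₗ f, eS.surjective.comp hf⟩

theorem stmt6 (R : Type u) [Ring R] (M : Type u) [AddCommGroup M] [Module R M]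
    (hM : IsCoKasch R M) (K : Submodule R M)
    (hK : K ≤ sInf {N : Submodule R M | IsCoatom N}) :
    IsCoKasch R (M ⧸ K) := by
  intro L S hS
  obtain ⟨f, hf⟩ := hM.exists_surjective_of_surjective K.mkQ_surjective L S
  have hKf : K ≤ LinearMap.ker f := hK.trans (Module.jacobson_le_ker_of_surjective hf)
  refine ⟨K.liftQ f hKf, ?_⟩
  rw [← LinearMap.range_eq_top, range_liftQ, LinearMap.range_eq_top]
  exact hf
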